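/- arXiv:math/0311040 — 2 statements merged into one kernel-verified Lean document; each statement's English description precedes it below -/
import Mathlib

section
/- Let γ, η be hyperbolic affine isometries of R^{2,1} with linear parts g, h and translational parts v_g, v_h, such that gh is hyperbolic. Then α(γη) = ⟨v_g, x⁰(gh)⟩ + ⟨v_h, x⁰(hg)⟩. -/
noncomputable section

/-- The Lorentzian bilinear form of signature (2,1) on ℝ³. -/
def ldot (x y : Fin 3 → ℝ) : ℝ := x 0 * y 0 + x 1 * y 1 - x 2 * y 2

/-- The Lorentz cross-product, the unique bilinear map with ⟨u, v ⊠ w⟩ = det[u v w]. -/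
def lcross (v w : Fin 3 → ℝ) : Fin 3 → ℝ :=
  ![v 1 * w 2 - v 2 * w 1, v 2 * w 0 - v 0 * w 2, -(v 0 * w 1 - v 1 * w 0)]

/-- Determinant of the 3×3 matrix with columns x, y, z. -/
def det3 (x y z : Fin 3 → ℝ) : ℝ := (Matrix.transpose (Matrix.of ![x, y, z])).det

/-- Membership in SO(2,1)⁰: preserves the Lorentzian form, has determinant 1,
and preserves the future lightcone. -/
def IsSOplus (g : Matrix (Fin 3) (Fin 3) ℝ) : Prop :=
  (∀ x y : Fin 3 → ℝ, ldot (g.mulVec x) (g.mulVec y) = ldot x y) ∧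
  g.det = 1 ∧
  (∀ x : Fin 3 → ℝ, ldot x x = 0 → x ≠ 0 → x 2 > 0 → (g.mulVec x) 2 > 0)

/-- c is a (real) eigenvalue of the 3×3 matrix g. -/
def IsEigenvalue (g : Matrix (Fin 3) (Fin 3) ℝ) (c : ℝ) : Prop :=
  ∃ v : Fin 3 → ℝ, v ≠ 0 ∧ g.mulVec v = c • v

/-- x has Euclidean length one. -/
def EuclUnit (x : Fin 3 → ℝ) : Prop := x 0 ^ 2 + x 1 ^ 2 + x 2 ^ 2 = 1

/-- A future-pointing lightlike vector. -/
def IsFutureNull (x : Fin 3 → ℝ) : Prop := ldot x x = 0 ∧ x 2 > 0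

/-- The null frame of a hyperbolic g ∈ SO(2,1)⁰ : x0 is the unit-spacelike 1-eigenvector,
xm and xp are future-pointing Euclidean-unit eigenvectors for the eigenvalues λ and λ⁻¹
with 0 < λ < 1, and (x0, xm, xp) is positively oriented.  These conditions determine
x0 = x⁰(g), xm = x⁻(g), xp = x⁺(g) uniquely. -/
def IsNullFrameOf (g : Matrix (Fin 3) (Fin 3) ℝ) (x0 xm xp : Fin 3 → ℝ) : Prop :=
  g.mulVec x0 = x0 ∧ ldot x0 x0 = 1 ∧
  IsFutureNull xm ∧ EuclUnit xm ∧ IsFutureNull xp ∧ EuclUnit xp ∧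
  ∃ l : ℝ, 0 < l ∧ l < 1 ∧ g.mulVec xm = l • xm ∧ g.mulVec xp = l⁻¹ • xp ∧
    det3 x0 xm xp > 0

/-- g is hyperbolic: it admits three distinct real eigenvalues. -/
def IsHyperbolic (g : Matrix (Fin 3) (Fin 3) ℝ) : Prop :=
  ∃ a b c : ℝ, a ≠ b ∧ b ≠ c ∧ a ≠ c ∧
    IsEigenvalue g a ∧ IsEigenvalue g b ∧ IsEigenvalue g c

/- ### Auxiliary lemmas -/

lemma ldot_add_left (x y z : Fin 3 → ℝ) : ldot (x + y) z = ldot x z + ldot y z := by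
  simp [ldot]; ring

lemma ldot_smul_smul (c d : ℝ) (x y : Fin 3 → ℝ) : ldot (c • x) (d • y) = c * d * ldot x y := by
  simp [ldot]; ring

lemma det3_expand (x y z : Fin 3 → ℝ) :
    det3 x y z = x 0 * (y 1 * z 2 - y 2 * z 1) - y 0 * (x 1 * z 2 - x 2 * z 1)
      + z 0 * (x 1 * y 2 - x 2 * y 1) := by
  simp [det3, Matrix.det_fin_three, Matrix.transpose_apply, Matrix.cons_val_zero,
    Matrix.cons_val_one, Matrix.head_cons, Matrix.cons_val_two, Matrix.tail_cons,
    Matrix.vecHead, Matrix.vecTail]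
  ring

lemma det3_smul1 (c : ℝ) (x y z : Fin 3 → ℝ) : det3 (c • x) y z = c * det3 x y z := by
  simp [det3_expand]; ring

lemma det3_smul23 (b c : ℝ) (x y z : Fin 3 → ℝ) :
    det3 x (b • y) (c • z) = b * c * det3 x y z := by
  simp [det3_expand]; ring

lemma det3_smul (a b c : ℝ) (x y z : Fin 3 → ℝ) :
    det3 (a • x) (b • y) (c • z) = a * b * c * det3 x y z := by
  simp [det3_expand]; ring

lemma det3_map (M : Matrix (Fin 3) (Fin 3) ℝ) (x y z : Fin 3 → ℝ) :
    det3 (M.mulVec x) (M.mulVec y) (M.mulVec z) = M.det * det3 x y z := by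
  simp [det3_expand, Matrix.det_fin_three, Matrix.mulVec, dotProduct, Fin.sum_univ_three]
  ring

/-- If `u, w` are eigenvectors of `M` for the eigenvalue `μ`, and `p, q` are eigenvectors
for two further, distinct, eigenvalues, then `w` is a multiple of `u`. -/
lemma eig_eq_smul (M : Matrix (Fin 3) (Fin 3) ℝ) (u w p q : Fin 3 → ℝ) (μ α β : ℝ)
    (hαμ : α ≠ μ) (hβμ : β ≠ μ) (hαβ : α ≠ β)
    (hu : M.mulVec u = μ • u) (hw : M.mulVec w = μ • w)
    (hp : M.mulVec p = α • p) (hq : M.mulVec q = β • q)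
    (hu0 : u ≠ 0) (hp0 : p ≠ 0) (hq0 : q ≠ 0) :
    ∃ c : ℝ, w = c • u := by
  classical
  set T : (Fin 3 → ℝ) →ₗ[ℝ] (Fin 3 → ℝ) := M.mulVecLin - μ • LinearMap.id with hT
  have hTu : T u = 0 := by
    simp [hT, Matrix.mulVecLin_apply, hu]
  have hTw : T w = 0 := by
    simp [hT, Matrix.mulVecLin_apply, hw]
  have hTp : T p = (α - μ) • p := by
    simp [hT, Matrix.mulVecLin_apply, hp, sub_smul]
  have hTq : T q = (β - μ) • q := by
    simp [hT, Matrix.mulVecLin_apply, hq, sub_smul]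
  have hpmem : p ∈ LinearMap.range T :=
    ⟨(α - μ)⁻¹ • p, by
      rw [map_smul, hTp, smul_smul, inv_mul_cancel₀ (sub_ne_zero.mpr hαμ), one_smul]⟩
  have hqmem : q ∈ LinearMap.range T :=
    ⟨(β - μ)⁻¹ • q, by
      rw [map_smul, hTq, smul_smul, inv_mul_cancel₀ (sub_ne_zero.mpr hβμ), one_smul]⟩
  have hpq : LinearIndependent ℝ ![p, q] := by
    rw [LinearIndependent.pair_iff]
    intro s t hst
    have h1 : M.mulVec (s • p + t • q) = s • α • p + t • β • q := by
      simp [Matrix.mulVec_add, Matrix.mulVec_smul, hp, hq]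
    rw [hst] at h1
    simp only [Matrix.mulVec_zero] at h1
    have h2 : (s * (α - β)) • p = 0 := by
      have h3 : s • α • p + t • β • q = 0 := h1.symm
      have h4 : β • (s • p + t • q) = 0 := by rw [hst, smul_zero]
      have h5 := sub_eq_zero.mpr (h3.trans h4.symm)
      rw [show s • α • p + t • β • q - β • (s • p + t • q) = (s * (α - β)) • p by
        simp [smul_smul, smul_add, sub_smul, mul_comm]; module] at h5
      exact h5
    have hs : s = 0 := by
      rcases smul_eq_zero.mp h2 with h | h
      · rcases mul_eq_zero.mp h with h | h
        · exact h
        · exact absurd (sub_eq_zero.mp h) hαβ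
      · exact absurd h hp0
    refine ⟨hs, ?_⟩
    rw [hs, zero_smul, zero_add] at hst
    rcases smul_eq_zero.mp hst with h | h
    · exact h
    · exact absurd h hq0
  have hspan : Submodule.span ℝ (Set.range ![p, q]) ≤ LinearMap.range T := by
    rw [Submodule.span_le]
    rintro x ⟨i, rfl⟩
    fin_cases i
    · exact hpmem
    · exact hqmem
  have hfr2 : Module.finrank ℝ (Submodule.span ℝ (Set.range ![p, q])) = 2 := by
    rw [finrank_span_eq_card hpq]; simp
  have hrange2 : 2 ≤ Module.finrank ℝ (LinearMap.range T) := by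
    rw [← hfr2]; exact Submodule.finrank_mono hspan
  have hrn : Module.finrank ℝ (LinearMap.range T) + Module.finrank ℝ (LinearMap.ker T) = 3 := by
    rw [LinearMap.finrank_range_add_finrank_ker]
    simp [Module.finrank_fin_fun]
  have hule : (Submodule.span ℝ {u} : Submodule ℝ (Fin 3 → ℝ)) ≤ LinearMap.ker T := by
    rw [Submodule.span_le, Set.singleton_subset_iff]
    exact hTu
  have hspanu : Module.finrank ℝ (Submodule.span ℝ ({u} : Set (Fin 3 → ℝ))) = 1 :=
    finrank_span_singleton hu0
  have hkereq : Submodule.span ℝ ({u} : Set (Fin 3 → ℝ)) = LinearMap.ker T :=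
    Submodule.eq_of_le_of_finrank_le hule (by omega)
  have hwmem : w ∈ Submodule.span ℝ ({u} : Set (Fin 3 → ℝ)) := by
    rw [hkereq]; exact hTw
  obtain ⟨c, hc⟩ := Submodule.mem_span_singleton.mp hwmem
  exact ⟨c, hc.symm⟩

/-- A 3×3 real matrix cannot have four eigenvectors with pairwise distinct eigenvalues. -/
lemma not_four_eig (M : Matrix (Fin 3) (Fin 3) ℝ) (v : Fin 4 → Fin 3 → ℝ) (μ : Fin 4 → ℝ)
    (hinj : Function.Injective μ) (h : ∀ i, M.mulVec (v i) = μ i • v i)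
    (h0 : ∀ i, v i ≠ 0) : False := by
  have hli : LinearIndependent ℝ v :=
    Module.End.eigenvectors_linearIndependent' (M.mulVecLin) μ hinj v
      (fun i => ⟨Module.End.mem_eigenspace_iff.mpr (by simp [Matrix.mulVecLin_apply, h i]), h0 i⟩)
  have hcard := hli.fintype_card_le_finrank
  simp [Module.finrank_fin_fun] at hcard

set_option maxHeartbeats 2000000 in
/-- Uniqueness of the null frame: the spacelike vectors of two null frames of `M` agree. -/
lemma x0_unique (M : Matrix (Fin 3) (Fin 3) ℝ) {x0 xm xp y0 ym yp : Fin 3 → ℝ}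
    (h1 : IsNullFrameOf M x0 xm xp) (h2 : IsNullFrameOf M y0 ym yp) : y0 = x0 := by
  obtain ⟨hMx0, hx0n, ⟨hxmnull, hxm2⟩, hxmE, ⟨hxpnull, hxp2⟩, hxpE, l, hl0, hl1, hMxm, hMxp,
    hdet⟩ := h1
  obtain ⟨hMy0, hy0n, ⟨hymnull, hym2⟩, hymE, ⟨hypnull, hyp2⟩, hypE, k, hk0, hk1, hMym, hMyp,
    hdet'⟩ := h2
  have hx00 : x0 ≠ 0 := fun hz => by simp [hz, ldot] at hx0n
  have hy00 : y0 ≠ 0 := fun hz => by simp [hz, ldot] at hy0n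
  have hxm0 : xm ≠ 0 := fun hz => by rw [hz] at hxm2; simp at hxm2
  have hxp0 : xp ≠ 0 := fun hz => by rw [hz] at hxp2; simp at hxp2
  have hym0 : ym ≠ 0 := fun hz => by rw [hz] at hym2; simp at hym2
  have hyp0 : yp ≠ 0 := fun hz => by rw [hz] at hyp2; simp at hyp2
  have hlinv : 1 < l⁻¹ := (one_lt_inv₀ hl0).mpr hl1
  have hkinv : 1 < k⁻¹ := (one_lt_inv₀ hk0).mpr hk1
  have hMx0' : M.mulVec x0 = (1 : ℝ) • x0 := by rw [hMx0, one_smul]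
  have hMy0' : M.mulVec y0 = (1 : ℝ) • y0 := by rw [hMy0, one_smul]
  -- the two frames have the same contracting eigenvalue
  have hkl : k = l := by
    by_contra hne
    refine not_four_eig M ![x0, xm, xp, ym] ![1, l, l⁻¹, k] ?_ ?_ ?_
    · intro i j hij
      fin_cases i <;> fin_cases j <;> simp at hij <;>
        first
          | rfl
          | (exact absurd hij.symm hne)
          | (exact absurd hij hne)
          | (exfalso; linarith)
    · intro i
      fin_cases i <;> simp [hMx0', hMxm, hMxp, hMym]
    · intro i
      fin_cases i <;> simp [hx00, hxm0, hxp0, hym0]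
  subst hkl
  -- the null eigenvectors agree
  have hymxm : ym = xm := by
    obtain ⟨a, ha⟩ := eig_eq_smul M xm ym x0 xp k 1 k⁻¹
      (ne_of_gt hk1) (ne_of_gt (hk1.trans hkinv)) (ne_of_lt hkinv)
      hMxm hMym hMx0' hMxp hxm0 hx00 hxp0
    have ha2 : ym 2 = a * xm 2 := by rw [ha]; simp
    have hapos : 0 < a := by
      rw [ha2] at hym2; nlinarith
    have haE : a ^ 2 * (xm 0 ^ 2 + xm 1 ^ 2 + xm 2 ^ 2) = 1 := by
      have := hymE
      rw [ha] at this
      simp only [EuclUnit, Pi.smul_apply, smul_eq_mul] at this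
      nlinarith [this]
    rw [hxmE, mul_one] at haE
    have ha1 : a = 1 := by nlinarith
    rw [ha, ha1, one_smul]
  have hypxp : yp = xp := by
    obtain ⟨a, ha⟩ := eig_eq_smul M xp yp x0 xm k⁻¹ 1 k
      (ne_of_lt hkinv) (ne_of_lt (hk1.trans hkinv)) (ne_of_gt hk1)
      hMxp hMyp hMx0' hMxm hxp0 hx00 hxm0
    have ha2 : yp 2 = a * xp 2 := by rw [ha]; simp
    have hapos : 0 < a := by
      rw [ha2] at hyp2; nlinarith
    have haE : a ^ 2 * (xp 0 ^ 2 + xp 1 ^ 2 + xp 2 ^ 2) = 1 := by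
      have := hypE
      rw [ha] at this
      simp only [EuclUnit, Pi.smul_apply, smul_eq_mul] at this
      nlinarith [this]
    rw [hxpE, mul_one] at haE
    have ha1 : a = 1 := by nlinarith
    rw [ha, ha1, one_smul]
  -- and finally the spacelike vectors
  obtain ⟨c, hc⟩ := eig_eq_smul M x0 y0 xm xp 1 k k⁻¹
    (ne_of_lt hk1) (ne_of_gt hkinv) (ne_of_lt (hk1.trans hkinv))
    hMx0' hMy0' hMxm hMxp hx00 hxm0 hxp0
  have hc2 : c * c = 1 := by
    have := hy0n
    rw [hc, ldot_smul_smul, hx0n, mul_one] at this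
    exact this
  have hcpos : 0 < c := by
    rw [hc, hymxm, hypxp, det3_smul1] at hdet'
    nlinarith
  have hc1 : c = 1 := by nlinarith
  rw [hc, hc1, one_smul]

/-- Transport of the null frame of `g*h` to one of `h*g` by applying `h`. -/
lemma frame_transport (g h : Matrix (Fin 3) (Fin 3) ℝ) (hg : IsSOplus g) (hh : IsSOplus h)
    {x0 xm xp : Fin 3 → ℝ} (F : IsNullFrameOf (g * h) x0 xm xp) :
    ∃ ym yp, IsNullFrameOf (h * g) (h.mulVec x0) ym yp := by
  obtain ⟨hMx0, hx0n, ⟨hxmnull, hxm2⟩, hxmE, ⟨hxpnull, hxp2⟩, hxpE, l, hl0, hl1, hMxm, hMxp,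
    hdet⟩ := F
  obtain ⟨hhform, hhdet, hhcone⟩ := hh
  have hxm0 : xm ≠ 0 := fun hz => by rw [hz] at hxm2; simp at hxm2
  have hxp0 : xp ≠ 0 := fun hz => by rw [hz] at hxp2; simp at hxp2
  set wm := h.mulVec xm with hwm
  set wp := h.mulVec xp with hwp
  have hwm2 : 0 < wm 2 := hhcone xm hxmnull hxm0 hxm2
  have hwp2 : 0 < wp 2 := hhcone xp hxpnull hxp0 hxp2
  have hwmnull : ldot wm wm = 0 := by rw [hwm, hhform]; exact hxmnull
  have hwpnull : ldot wp wp = 0 := by rw [hwp, hhform]; exact hxpnull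
  set n := Real.sqrt (wm 0 ^ 2 + wm 1 ^ 2 + wm 2 ^ 2) with hn
  set m := Real.sqrt (wp 0 ^ 2 + wp 1 ^ 2 + wp 2 ^ 2) with hm
  have hnpos : 0 < n := Real.sqrt_pos.mpr (by nlinarith [sq_nonneg (wm 0), sq_nonneg (wm 1)])
  have hmpos : 0 < m := Real.sqrt_pos.mpr (by nlinarith [sq_nonneg (wp 0), sq_nonneg (wp 1)])
  have hn2 : n ^ 2 = wm 0 ^ 2 + wm 1 ^ 2 + wm 2 ^ 2 :=
    Real.sq_sqrt (by positivity)
  have hm2 : m ^ 2 = wp 0 ^ 2 + wp 1 ^ 2 + wp 2 ^ 2 :=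
    Real.sq_sqrt (by positivity)
  refine ⟨n⁻¹ • wm, m⁻¹ • wp, ?_, ?_, ⟨?_, ?_⟩, ?_, ⟨?_, ?_⟩, ?_, l, hl0, hl1, ?_, ?_, ?_⟩
  · -- fixed vector
    rw [show (h * g).mulVec (h.mulVec x0) = h.mulVec ((g * h).mulVec x0) by
      rw [Matrix.mulVec_mulVec, Matrix.mulVec_mulVec, Matrix.mul_assoc], hMx0]
  · rw [hhform]; exact hx0n
  · rw [ldot_smul_smul, hwmnull, mul_zero]
  · simp only [Pi.smul_apply, smul_eq_mul]
    positivity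
  · show (n⁻¹ • wm) 0 ^ 2 + (n⁻¹ • wm) 1 ^ 2 + (n⁻¹ • wm) 2 ^ 2 = 1
    simp only [Pi.smul_apply, smul_eq_mul]
    field_simp
    linarith [hn2]
  · rw [ldot_smul_smul, hwpnull, mul_zero]
  · simp only [Pi.smul_apply, smul_eq_mul]
    positivity
  · show (m⁻¹ • wp) 0 ^ 2 + (m⁻¹ • wp) 1 ^ 2 + (m⁻¹ • wp) 2 ^ 2 = 1
    simp only [Pi.smul_apply, smul_eq_mul]
    field_simp
    linarith [hm2]
  · -- eigenvector for l
    rw [Matrix.mulVec_smul, hwm, show (h * g).mulVec (h.mulVec xm) = h.mulVec ((g * h).mulVec xm)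
      by rw [Matrix.mulVec_mulVec, Matrix.mulVec_mulVec, Matrix.mul_assoc], hMxm,
      Matrix.mulVec_smul]
    rw [smul_comm]
  · rw [Matrix.mulVec_smul, hwp, show (h * g).mulVec (h.mulVec xp) = h.mulVec ((g * h).mulVec xp)
      by rw [Matrix.mulVec_mulVec, Matrix.mulVec_mulVec, Matrix.mul_assoc], hMxp,
      Matrix.mulVec_smul]
    rw [smul_comm]
  · -- orientation
    have hdm : det3 (h.mulVec x0) (n⁻¹ • wm) (m⁻¹ • wp) =
        n⁻¹ * m⁻¹ * (h.det * det3 x0 xm xp) := by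
      rw [hwm, hwp, det3_smul23, det3_map]
    rw [hdm, hhdet, one_mul]
    have h1 : 0 < n⁻¹ := by positivity
    have h2 : 0 < m⁻¹ := by positivity
    exact mul_pos (mul_pos h1 h2) hdet

/-- α(γη) = ⟨v_g, x⁰(gh)⟩ + ⟨v_h, x⁰(hg)⟩, where γ : x ↦ g x + v_g and
η : x ↦ h x + v_h are hyperbolic affine isometries whose product has hyperbolic
linear part g h; the translational part of γη is g v_h + v_g. -/
theorem stmt_11 (g h : Matrix (Fin 3) (Fin 3) ℝ) (hg : IsSOplus g) (hh : IsSOplus h)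
    (vg vh : Fin 3 → ℝ)
    (hghyp : ∃ x0 xm xp, IsNullFrameOf g x0 xm xp)
    (hhhyp : ∃ x0 xm xp, IsNullFrameOf h x0 xm xp)
    (x0gh x0hg : Fin 3 → ℝ)
    (hgh : ∃ xm xp, IsNullFrameOf (g * h) x0gh xm xp)
    (hhg : ∃ xm xp, IsNullFrameOf (h * g) x0hg xm xp) :
    ldot (g.mulVec vh + vg) x0gh = ldot vg x0gh + ldot vh x0hg := by
  obtain ⟨xm, xp, Fgh⟩ := hgh
  obtain ⟨ym', yp', Fhg⟩ := hhg
  obtain ⟨ym, yp, Ft⟩ := frame_transport g h hg hh Fgh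
  have key : x0hg = h.mulVec x0gh := x0_unique (h * g) Ft Fhg
  have hfix : g.mulVec (h.mulVec x0gh) = x0gh := by
    rw [Matrix.mulVec_mulVec]; exact Fgh.1
  have hmain : ldot (g.mulVec vh) x0gh = ldot vh x0hg := by
    conv_lhs => rw [← hfix]
    rw [hg.1, key]
  rw [ldot_add_left, hmain, add_comm]
end
end

section
/- In the free group F₂ = ⟨g, h⟩, for any cyclically reduced word w, each occurrence in w of a factor g h^i g⁻¹ (maximal, with i > 0) corresponds bijectively, via the cyclic symmetry used in the Margulis invariant sum formula, to an occurrence of a factor of the form g h^{-i} g⁻¹ in the expansion: specifically, in the sum α(ω) = Σ_k ⟨v_k, x⁰(w_k)⟩ over letters of w, the summands of the form ⟨v_g, x⁰(g h^i g⁻¹ w')⟩ with i > 0 are in one-to-one correspondence with summands of the form ⟨v_g, x⁰(g h^{-i} g⁻¹ w'')⟩. -/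
noncomputable section

/-- Letters of the free group ⟨g, h⟩: a letter is a pair (generator, sign), where
generator 0 is g, generator 1 is h, sign `true` is exponent +1 and `false` is -1. -/
abbrev Letter := Fin 2 × Bool

/-- Two adjacent letters do not cancel. -/
def NoCancel (a b : Letter) : Prop := a.1 ≠ b.1 ∨ a.2 = b.2

/-- A nonempty word is cyclically reduced if no adjacent pair of letters cancels,
including around the cyclic wrap. -/
def CyclicallyReduced (w : List Letter) : Prop :=
  w ≠ [] ∧ List.Chain' NoCancel (w ++ w)

/-- The cyclic rotation of the word w starting at position k. -/
def cycRot (w : List Letter) (k : ℕ) : List Letter := w.drop k ++ w.take k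

/-- Index k contributes, in the Margulis invariant sum α(ω) = Σ ⟨v_k, x⁰(w_k)⟩, a
summand of the form ⟨v_g, x⁰(g hⁱ g⁻¹ w')⟩ with i > 0.  This happens either (Case 1)
when the letter at k is g and the cyclic rotation of w at k begins with g hⁱ g⁻¹
(a maximal factor g hⁱ g⁻¹, i > 0), or (Case 2) when the letter at k is g⁻¹ and it is
cyclically preceded by g h⁻ⁱ, so that the associated word g (w_k')⁻¹ begins with
g hⁱ g⁻¹. -/
def PosSummand (w : List Letter) (k : ℕ) : Prop :=
  (∃ i : ℕ, 1 ≤ i ∧ i + 2 ≤ w.length ∧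
      (cycRot w k).take (i + 2) =
        ((0 : Fin 2), true) :: (List.replicate i ((1 : Fin 2), true) ++
          [((0 : Fin 2), false)])) ∨
  (∃ i : ℕ, 1 ≤ i ∧ i + 2 ≤ w.length ∧
      (cycRot w k).take 1 = [((0 : Fin 2), false)] ∧
      ∃ s : List Letter,
        cycRot w k = s ++ (((0 : Fin 2), true) :: List.replicate i ((1 : Fin 2), false)))

/-- Index k contributes a summand of the form ⟨v_g, x⁰(g h⁻ⁱ g⁻¹ w'')⟩ with i > 0
(same two cases, with the sign of the h-run reversed). -/
def NegSummand (w : List Letter) (k : ℕ) : Prop :=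
  (∃ i : ℕ, 1 ≤ i ∧ i + 2 ≤ w.length ∧
      (cycRot w k).take (i + 2) =
        ((0 : Fin 2), true) :: (List.replicate i ((1 : Fin 2), false) ++
          [((0 : Fin 2), false)])) ∨
  (∃ i : ℕ, 1 ≤ i ∧ i + 2 ≤ w.length ∧
      (cycRot w k).take 1 = [((0 : Fin 2), false)] ∧
      ∃ s : List Letter,
        cycRot w k = s ++ (((0 : Fin 2), true) :: List.replicate i ((1 : Fin 2), true)))

/- ## Auxiliary development -/

namespace Stmt19Aux

/-- the letter g -/
def gP : Letter := ((0 : Fin 2), true)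
/-- the letter g⁻¹ -/
def gM : Letter := ((0 : Fin 2), false)
/-- a run of i letters h^{±1} (sign b) -/
def hRun (b : Bool) (i : ℕ) : List Letter := List.replicate i ((1 : Fin 2), b)

/-- predicate for takeWhile: being the letter (h, b) -/
def pb (b : Bool) : Letter → Bool := fun a => a == ((1 : Fin 2), b)

lemma pb_h (b : Bool) : pb b ((1 : Fin 2), b) = true := by simp [pb]

lemma pb_g (b x : Bool) : pb b ((0 : Fin 2), x) = false := by
  simp [pb, Prod.ext_iff]

lemma takeWhile_run_cons (b : Bool) (i : ℕ) (x : Bool) (t : List Letter) :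
    ((hRun b i ++ ((0 : Fin 2), x) :: t).takeWhile (pb b)).length = i := by
  unfold hRun
  induction i with
  | zero => simp [List.takeWhile_cons, pb_g]
  | succ n ih =>
      rw [List.replicate_succ, List.cons_append,
        List.takeWhile_cons_of_pos (pb_h b), List.length_cons, ih]

/-- Case 1 structured form: rotation starts with g h^i_b g⁻¹ -/
def St1 (w : List Letter) (b : Bool) : Set ℕ :=
  {k | k < w.length ∧ ∃ i : ℕ, ∃ t : List Letter, 1 ≤ i ∧
      w.rotate k = gP :: (hRun b i ++ gM :: t)}

/-- Case 2 structured form: rotation is g⁻¹ s' g h^i_b -/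
def St2 (w : List Letter) (b : Bool) : Set ℕ :=
  {k | k < w.length ∧ ∃ i : ℕ, ∃ s : List Letter, 1 ≤ i ∧
      w.rotate k = gM :: (s ++ gP :: hRun b i)}

lemma cycRot_eq {w : List Letter} {k : ℕ} (hk : k ≤ w.length) :
    cycRot w k = w.rotate k :=
  (List.rotate_eq_drop_append_take hk).symm

lemma case1_iff {w : List Letter} {b : Bool} {k : ℕ} (hk : k < w.length) :
    (∃ i : ℕ, 1 ≤ i ∧ i + 2 ≤ w.length ∧
      (cycRot w k).take (i + 2) =
        ((0 : Fin 2), true) :: (List.replicate i ((1 : Fin 2), b) ++ [((0 : Fin 2), false)]))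
    ↔ (∃ i : ℕ, ∃ t : List Letter, 1 ≤ i ∧
        w.rotate k = gP :: (hRun b i ++ gM :: t)) := by
  rw [cycRot_eq hk.le]
  constructor
  · rintro ⟨i, hi, _, htake⟩
    have hpre : (((0 : Fin 2), true) ::
        (List.replicate i ((1 : Fin 2), b) ++ [((0 : Fin 2), false)])) <+: w.rotate k := by
      rw [← htake]; exact List.take_prefix _ _
    obtain ⟨t, ht⟩ := hpre
    exact ⟨i, t, hi, by rw [← ht]; simp [gP, gM, hRun]⟩
  · rintro ⟨i, t, hi, hrot⟩
    have hlen : w.length = i + 2 + t.length := by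
      have := congrArg List.length hrot
      simp [gP, gM, hRun] at this
      omega
    refine ⟨i, hi, by omega, ?_⟩
    have hre : gP :: (hRun b i ++ gM :: t)
        = (((0 : Fin 2), true) :: (List.replicate i ((1 : Fin 2), b) ++ [((0 : Fin 2), false)])) ++ t := by
      simp [gP, gM, hRun]
    rw [hrot, hre, List.take_left' (by simp)]

lemma case2_iff {w : List Letter} {b : Bool} {k : ℕ} (hk : k < w.length) :
    (∃ i : ℕ, 1 ≤ i ∧ i + 2 ≤ w.length ∧
      (cycRot w k).take 1 = [((0 : Fin 2), false)] ∧
      ∃ s : List Letter,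
        cycRot w k = s ++ (((0 : Fin 2), true) :: List.replicate i ((1 : Fin 2), b)))
    ↔ (∃ i : ℕ, ∃ s : List Letter, 1 ≤ i ∧
        w.rotate k = gM :: (s ++ gP :: hRun b i)) := by
  rw [cycRot_eq hk.le]
  constructor
  · rintro ⟨i, hi, _, h1, s, hs⟩
    match s, hs with
    | [], hs => rw [hs] at h1; simp [Prod.ext_iff] at h1
    | a :: s', hs =>
        rw [hs] at h1
        simp at h1
        refine ⟨i, s', hi, ?_⟩
        rw [hs, h1]
        simp [gP, gM, hRun]
  · rintro ⟨i, s, hi, hs⟩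
    have hlen : w.length = s.length + i + 2 := by
      have := congrArg List.length hs
      simp [gP, gM, hRun] at this
      omega
    refine ⟨i, hi, by omega, by rw [hs]; rfl, gM :: s, by rw [hs]; simp [gP, gM, hRun]⟩

/-- forward shift map: from start of pattern to position of the g⁻¹ -/
def shiftF (w : List Letter) (b : Bool) (k : ℕ) : ℕ :=
  (k + 1 + ((w.rotate (k + 1)).takeWhile (pb b)).length) % w.length

/-- backward shift map: from the g⁻¹ position back to the g beginning the h-run before it -/
def shiftG (w : List Letter) (b : Bool) (k : ℕ) : ℕ :=
  (k + (w.length - ((((w.rotate k).reverse).takeWhile (pb b)).length + 1))) % w.length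

lemma mod_trick {a c n k : ℕ} (h : a + c = n) (hk : k < n) :
    ((k + a) % n + c) % n = k := by
  rw [Nat.mod_add_mod]
  have h2 : k + a + c = k + n := by omega
  rw [h2, Nat.add_mod_right, Nat.mod_eq_of_lt hk]

lemma step1 {w : List Letter} {b : Bool} {k i : ℕ} {t : List Letter} (hk : k < w.length)
    (hrot : w.rotate k = gP :: (hRun b i ++ gM :: t)) :
    shiftF w b k = (k + (i + 1)) % w.length ∧
    w.rotate ((k + (i + 1)) % w.length) = gM :: (t ++ gP :: hRun b i) := by
  have hlen : w.length = i + 2 + t.length := by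
    have := congrArg List.length hrot
    simp [gP, gM, hRun] at this
    omega
  have h1 : w.rotate (k + 1) = hRun b i ++ ((0 : Fin 2), false) :: (t ++ [gP]) := by
    rw [← List.rotate_rotate, hrot]
    have : (gP :: (hRun b i ++ gM :: t)).rotate (0 + 1)
        = ((hRun b i ++ gM :: t) ++ [gP]).rotate 0 := List.rotate_cons_succ _ _ _
    simpa [gM] using this
  constructor
  · unfold shiftF
    rw [h1, takeWhile_run_cons]
    congr 1
    omega
  · rw [List.rotate_mod, ← List.rotate_rotate, hrot]
    have hre : gP :: (hRun b i ++ gM :: t) = (gP :: hRun b i) ++ (gM :: t) := by simp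
    have hl : (gP :: hRun b i).length = i + 1 := by simp [hRun]
    rw [hre, ← hl, List.rotate_append_length_eq]
    simp

lemma step2 {w : List Letter} {b : Bool} {k i : ℕ} {s : List Letter} (hk : k < w.length)
    (hrot : w.rotate k = gM :: (s ++ gP :: hRun b i)) :
    shiftG w b k = (k + (s.length + 1)) % w.length ∧
    w.rotate ((k + (s.length + 1)) % w.length) = gP :: (hRun b i ++ gM :: s) ∧
    w.length = s.length + 1 + (i + 1) := by
  have hlen : w.length = s.length + 1 + (i + 1) := by
    have := congrArg List.length hrot
    simp [gP, gM, hRun] at this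
    omega
  have hrev : (w.rotate k).reverse = hRun b i ++ ((0 : Fin 2), true) :: (s.reverse ++ [gM]) := by
    rw [hrot]
    simp [gP, gM, hRun, List.reverse_replicate]
  refine ⟨?_, ?_, hlen⟩
  · unfold shiftG
    rw [hrev, takeWhile_run_cons]
    congr 1
    omega
  · rw [List.rotate_mod, ← List.rotate_rotate, hrot]
    have hre : gM :: (s ++ gP :: hRun b i) = (gM :: s) ++ (gP :: hRun b i) := by simp
    have hl : (gM :: s).length = s.length + 1 := by simp
    rw [hre, ← hl, List.rotate_append_length_eq]
    simp

lemma gf {w : List Letter} {b : Bool} {k : ℕ} (hmem : k ∈ St1 w b) :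
    shiftF w b k ∈ St2 w b ∧ shiftG w b (shiftF w b k) = k := by
  obtain ⟨hk, i, t, hi, hrot⟩ := hmem
  have hn : 0 < w.length := by omega
  obtain ⟨hF, hrot'⟩ := step1 hk hrot
  have hk' : (k + (i + 1)) % w.length < w.length := Nat.mod_lt _ hn
  obtain ⟨hG, _, hlen⟩ := step2 hk' hrot'
  constructor
  · rw [hF]; exact ⟨hk', i, t, hi, hrot'⟩
  · rw [hF, hG, mod_trick (by omega) hk]

lemma fg {w : List Letter} {b : Bool} {k : ℕ} (hmem : k ∈ St2 w b) :
    shiftG w b k ∈ St1 w b ∧ shiftF w b (shiftG w b k) = k := by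
  obtain ⟨hk, i, s, hi, hrot⟩ := hmem
  have hn : 0 < w.length := by omega
  obtain ⟨hG, hrot', hlen⟩ := step2 hk hrot
  have hk' : (k + (s.length + 1)) % w.length < w.length := Nat.mod_lt _ hn
  obtain ⟨hF, _⟩ := step1 hk' hrot'
  constructor
  · rw [hG]; exact ⟨hk', i, s, hi, hrot'⟩
  · rw [hG, hF, mod_trick (by omega) hk]

lemma key (w : List Letter) (b : Bool) : (St1 w b).ncard = (St2 w b).ncard := by
  have himg : shiftF w b '' St1 w b = St2 w b := by
    apply Set.Subset.antisymm
    · rintro _ ⟨k, hk, rfl⟩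
      exact (gf hk).1
    · intro k hk
      exact ⟨shiftG w b k, (fg hk).1, (fg hk).2⟩
  have hinj : Set.InjOn (shiftF w b) (St1 w b) := by
    intro k₁ h₁ k₂ h₂ he
    rw [← (gf h₁).2, ← (gf h₂).2, he]
  rw [← himg, Set.ncard_image_of_injOn hinj]

lemma st_finite (w : List Letter) (S : Set ℕ) (h : S ⊆ {k | k < w.length}) : S.Finite :=
  Set.Finite.subset (Set.finite_Iio w.length) h

lemma disj (w : List Letter) (b₁ b₂ : Bool) : Disjoint (St1 w b₁) (St2 w b₂) := by
  rw [Set.disjoint_left]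
  rintro k ⟨hk, i, t, hi, h1⟩ ⟨hk', i', s, hi', h2⟩
  rw [h1] at h2
  simp [gP, gM] at h2

end Stmt19Aux

open Stmt19Aux

/-- In the Margulis invariant sum over the letters of a cyclically reduced word w,
the summands of the form ⟨v_g, x⁰(g hⁱ g⁻¹ w')⟩ (i > 0) are in one-to-one
correspondence with the summands of the form ⟨v_g, x⁰(g h⁻ⁱ g⁻¹ w'')⟩ (i > 0). -/
theorem stmt_19 (w : List Letter) (hw : CyclicallyReduced w) :
    {k : ℕ | k < w.length ∧ PosSummand w k}.ncard =
      {k : ℕ | k < w.length ∧ NegSummand w k}.ncard := by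
  have hpos : {k : ℕ | k < w.length ∧ PosSummand w k} = St1 w true ∪ St2 w false := by
    ext k
    simp only [Set.mem_setOf_eq, Set.mem_union, St1, St2, PosSummand]
    constructor
    · rintro ⟨hk, h | h⟩
      · exact Or.inl ⟨hk, (case1_iff hk).mp h⟩
      · exact Or.inr ⟨hk, (case2_iff hk).mp h⟩
    · rintro (⟨hk, h⟩ | ⟨hk, h⟩)
      · exact ⟨hk, Or.inl ((case1_iff hk).mpr h)⟩
      · exact ⟨hk, Or.inr ((case2_iff hk).mpr h)⟩
  have hneg : {k : ℕ | k < w.length ∧ NegSummand w k} = St1 w false ∪ St2 w true := by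
    ext k
    simp only [Set.mem_setOf_eq, Set.mem_union, St1, St2, NegSummand]
    constructor
    · rintro ⟨hk, h | h⟩
      · exact Or.inl ⟨hk, (case1_iff hk).mp h⟩
      · exact Or.inr ⟨hk, (case2_iff hk).mp h⟩
    · rintro (⟨hk, h⟩ | ⟨hk, h⟩)
      · exact ⟨hk, Or.inl ((case1_iff hk).mpr h)⟩
      · exact ⟨hk, Or.inr ((case2_iff hk).mpr h)⟩
  rw [hpos, hneg,
    Set.ncard_union_eq (disj w true false)
      (st_finite w _ (fun k hk => hk.1)) (st_finite w _ (fun k hk => hk.1)),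
    Set.ncard_union_eq (disj w false true)
      (st_finite w _ (fun k hk => hk.1)) (st_finite w _ (fun k hk => hk.1)),
    key w true, ← key w false]
  omega
end
end
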